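/- arXiv:2601.18145 — 2 statements merged into one kernel-verified Lean document; each statement's English description precedes it below -/
import Mathlib

section
/- (Certified p-value upper bound on a triangle) With the same setup, let O_T := {r ∈ Δ_{3,n} : g_{r;r̂}(w⁽ʲ⁾) > 0 for all j = 1,2,3}. Then for every (u,v) ∈ T, ρ_{r̂}(p(u,v)) ≤ 1 − Σ_{r ∈ O_T} P̲_T(r). -/
/-- Normalizing constant of the softmax map. -/
noncomputable def Z (u v : ℝ) : ℝ := 1 + Real.exp u + Real.exp v

/-- Softmax parametrization of the interior of the simplex `Δ₃`. -/
noncomputable def p3 (u v : ℝ) : Fin 3 → ℝ :=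
  ![Real.exp u / Z u v, Real.exp v / Z u v, 1 / Z u v]

/-- Multinomial probability of count vector `r` under `p(u,v)`. -/
noncomputable def P3 (u v : ℝ) (r : Fin 3 → ℕ) : ℝ :=
  (Nat.multinomial Finset.univ r : ℝ) * ∏ i, p3 u v i ^ r i

/-- Exact p-value of the observed outcome `rhat` at the parameter `p(u,v)`. -/
noncomputable def pval3 (n : ℕ) (rhat : Fin 3 → ℕ) (u v : ℝ) : ℝ :=
  ∑ r ∈ (Finset.Nat.antidiagonalTuple 3 n).filter (fun r => P3 u v r ≤ P3 u v rhat),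
    P3 u v r

/-- The affine likelihood-ordering function `g_{r;r̂}` in log-odds coordinates. -/
noncomputable def gfun (r rhat : Fin 3 → ℕ) (w : ℝ × ℝ) : ℝ :=
  ((r 0 : ℝ) - (rhat 0 : ℝ)) * w.1 + ((r 1 : ℝ) - (rhat 1 : ℝ)) * w.2
    - (Real.log (Nat.multinomial Finset.univ rhat : ℝ)
        - Real.log (Nat.multinomial Finset.univ r : ℝ))

lemma Z_pos (u v : ℝ) : 0 < Z u v := by unfold Z; positivity

lemma p3_sum (u v : ℝ) : ∑ i, p3 u v i = 1 := by
  have hZ := (Z_pos u v).ne'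
  rw [Fin.sum_univ_three]
  simp only [p3, Matrix.cons_val_zero, Matrix.cons_val_one, Matrix.head_cons,
    Matrix.cons_val_two, Matrix.tail_cons]
  field_simp [Z]
  unfold Z; ring

lemma p3_pos (u v : ℝ) (i : Fin 3) : 0 < p3 u v i := by
  fin_cases i <;> simp [p3, Z] <;> positivity

lemma P3_pos (u v : ℝ) (r : Fin 3 → ℕ) : 0 < P3 u v r :=
  mul_pos (by exact_mod_cast Nat.multinomial_pos _ _)
    (Finset.prod_pos fun i _ => pow_pos (p3_pos u v i) _)

lemma sum_P3 (n : ℕ) (u v : ℝ) :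
    ∑ r ∈ Finset.Nat.antidiagonalTuple 3 n, P3 u v r = 1 := by
  have h := Finset.sum_pow_eq_sum_piAntidiag (Finset.univ : Finset (Fin 3)) (p3 u v) n
  rw [Finset.piAntidiag_univ_fin_eq_antidiagonalTuple, p3_sum, one_pow] at h
  simpa only [P3] using h.symm

/-- log-linear exponent of the multinomial density. -/
noncomputable def Lf (r : Fin 3 → ℕ) (q : ℝ × ℝ) : ℝ :=
  (r 0 : ℝ) * q.1 + (r 1 : ℝ) * q.2
    - ((r 0 : ℝ) + (r 1 : ℝ) + (r 2 : ℝ)) * Real.log (Z q.1 q.2)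

lemma P3_eq (u v : ℝ) (r : Fin 3 → ℕ) :
    P3 u v r = (Nat.multinomial Finset.univ r : ℝ) * Real.exp (Lf r (u, v)) := by
  have hZ : (0:ℝ) < Z u v := Z_pos u v
  have hlog : Real.exp (Real.log (Z u v)) = Z u v := Real.exp_log hZ
  unfold P3 p3 Lf
  rw [Fin.prod_univ_three]
  simp only [Matrix.cons_val_zero, Matrix.cons_val_one, Matrix.head_cons,
    Matrix.cons_val_two, Matrix.tail_cons]
  congr 1
  rw [show (r 0 : ℝ) * (u, v).1 + (r 1 : ℝ) * (u, v).2
      - ((r 0 : ℝ) + (r 1 : ℝ) + (r 2 : ℝ)) * Real.log (Z (u, v).1 (u, v).2)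
      = (r 0 : ℝ) * (u - Real.log (Z u v)) + ((r 1 : ℝ) * (v - Real.log (Z u v))
        + (r 2 : ℝ) * (0 - Real.log (Z u v))) by ring]
  rw [Real.exp_add, Real.exp_add, Real.exp_nat_mul, Real.exp_nat_mul, Real.exp_nat_mul,
    Real.exp_sub, Real.exp_sub, Real.exp_sub, hlog, Real.exp_zero]
  norm_num
  ring

lemma fst_comb {ι : Type*} (t : Finset ι) (lam : ι → ℝ) (z : ι → ℝ × ℝ) :
    (∑ i ∈ t, lam i • z i).1 = ∑ i ∈ t, lam i * (z i).1 := by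
  rw [Prod.fst_sum]; rfl

lemma snd_comb {ι : Type*} (t : Finset ι) (lam : ι → ℝ) (z : ι → ℝ × ℝ) :
    (∑ i ∈ t, lam i • z i).2 = ∑ i ∈ t, lam i * (z i).2 := by
  rw [Prod.snd_sum]; rfl

lemma Z_comb_le {ι : Type*} (t : Finset ι) (lam : ι → ℝ) (z : ι → ℝ × ℝ)
    (h0 : ∀ i ∈ t, 0 ≤ lam i) (h1 : ∑ i ∈ t, lam i = 1) :
    Real.log (Z (∑ i ∈ t, lam i • z i).1 (∑ i ∈ t, lam i • z i).2)
      ≤ ∑ i ∈ t, lam i * Real.log (Z (z i).1 (z i).2) := by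
  have hZ : ∀ i, (0:ℝ) < Z (z i).1 (z i).2 := fun i => Z_pos _ _
  set E := ∏ i ∈ t, (Z (z i).1 (z i).2) ^ lam i with hE
  have hEpos : 0 < E := Finset.prod_pos fun i _ => Real.rpow_pos_of_pos (hZ i) _
  have prod_exp : ∀ f : ι → ℝ,
      ∏ i ∈ t, Real.exp (f i) ^ lam i = Real.exp (∑ i ∈ t, lam i * f i) := by
    intro f
    rw [Real.exp_sum]
    exact Finset.prod_congr rfl fun i _ => by rw [mul_comm, Real.exp_mul]
  have key : Z (∑ i ∈ t, lam i • z i).1 (∑ i ∈ t, lam i • z i).2 ≤ E := by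
    have H1 := Real.geom_mean_le_arith_mean_weighted t lam
      (fun i => Real.exp (z i).1 / Z (z i).1 (z i).2) h0 h1
      (fun i _ => le_of_lt (div_pos (Real.exp_pos _) (hZ i)))
    have H2 := Real.geom_mean_le_arith_mean_weighted t lam
      (fun i => Real.exp (z i).2 / Z (z i).1 (z i).2) h0 h1
      (fun i _ => le_of_lt (div_pos (Real.exp_pos _) (hZ i)))
    have H3 := Real.geom_mean_le_arith_mean_weighted t lam
      (fun i => 1 / Z (z i).1 (z i).2) h0 h1
      (fun i _ => le_of_lt (div_pos one_pos (hZ i)))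
    have e1 : ∏ i ∈ t, (Real.exp (z i).1 / Z (z i).1 (z i).2) ^ lam i
        = Real.exp (∑ i ∈ t, lam i * (z i).1) / E :=
      calc ∏ i ∈ t, (Real.exp (z i).1 / Z (z i).1 (z i).2) ^ lam i
          = ∏ i ∈ t, (Real.exp (z i).1 ^ lam i / Z (z i).1 (z i).2 ^ lam i) :=
            Finset.prod_congr rfl fun i _ => Real.div_rpow (Real.exp_nonneg _) (hZ i).le _
        _ = (∏ i ∈ t, Real.exp (z i).1 ^ lam i) / E := Finset.prod_div_distrib _ _
        _ = Real.exp (∑ i ∈ t, lam i * (z i).1) / E := by rw [prod_exp]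
    have e2 : ∏ i ∈ t, (Real.exp (z i).2 / Z (z i).1 (z i).2) ^ lam i
        = Real.exp (∑ i ∈ t, lam i * (z i).2) / E :=
      calc ∏ i ∈ t, (Real.exp (z i).2 / Z (z i).1 (z i).2) ^ lam i
          = ∏ i ∈ t, (Real.exp (z i).2 ^ lam i / Z (z i).1 (z i).2 ^ lam i) :=
            Finset.prod_congr rfl fun i _ => Real.div_rpow (Real.exp_nonneg _) (hZ i).le _
        _ = (∏ i ∈ t, Real.exp (z i).2 ^ lam i) / E := Finset.prod_div_distrib _ _
        _ = Real.exp (∑ i ∈ t, lam i * (z i).2) / E := by rw [prod_exp]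
    have e3 : ∏ i ∈ t, (1 / Z (z i).1 (z i).2) ^ lam i = 1 / E :=
      calc ∏ i ∈ t, ((1:ℝ) / Z (z i).1 (z i).2) ^ lam i
          = ∏ i ∈ t, ((1:ℝ) ^ lam i / Z (z i).1 (z i).2 ^ lam i) :=
            Finset.prod_congr rfl fun i _ => Real.div_rpow zero_le_one (hZ i).le _
        _ = (∏ i ∈ t, (1:ℝ) ^ lam i) / E := Finset.prod_div_distrib _ _
        _ = 1 / E := by rw [Finset.prod_congr rfl fun i _ => Real.one_rpow (lam i),
              Finset.prod_const_one]
    rw [e1] at H1; rw [e2] at H2; rw [e3] at H3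
    have hsum : ∑ i ∈ t, lam i * (Real.exp (z i).1 / Z (z i).1 (z i).2)
        + ∑ i ∈ t, lam i * (Real.exp (z i).2 / Z (z i).1 (z i).2)
        + ∑ i ∈ t, lam i * (1 / Z (z i).1 (z i).2) = 1 := by
      rw [← Finset.sum_add_distrib, ← Finset.sum_add_distrib,
        Finset.sum_congr rfl (fun i (_ : i ∈ t) => ?_), h1]
      have hz : (1:ℝ) + Real.exp (z i).1 + Real.exp (z i).2 ≠ 0 := by positivity
      simp only [Z]
      field_simp
      ring
    have hdiv : (Real.exp (∑ i ∈ t, lam i * (z i).1)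
        + Real.exp (∑ i ∈ t, lam i * (z i).2) + 1) / E ≤ 1 := by
      rw [add_div, add_div]
      linarith
    have := (div_le_one hEpos).1 hdiv
    rw [fst_comb, snd_comb]
    unfold Z
    linarith
  calc Real.log (Z (∑ i ∈ t, lam i • z i).1 (∑ i ∈ t, lam i • z i).2)
      ≤ Real.log E := Real.log_le_log (Z_pos _ _) key
    _ = ∑ i ∈ t, lam i * Real.log (Z (z i).1 (z i).2) := by
        rw [hE, Real.log_prod fun i _ => (Real.rpow_pos_of_pos (hZ i) _).ne']
        exact Finset.sum_congr rfl fun i _ => Real.log_rpow (hZ i) _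

lemma Lf_comb_le {ι : Type*} (t : Finset ι) (lam : ι → ℝ) (z : ι → ℝ × ℝ)
    (h0 : ∀ i ∈ t, 0 ≤ lam i) (h1 : ∑ i ∈ t, lam i = 1) (r : Fin 3 → ℕ) :
    ∑ i ∈ t, lam i * Lf r (z i) ≤ Lf r (∑ i ∈ t, lam i • z i) := by
  have hm : (0:ℝ) ≤ (r 0 : ℝ) + (r 1 : ℝ) + (r 2 : ℝ) := by positivity
  have hlog := Z_comb_le t lam z h0 h1
  have expand : ∑ i ∈ t, lam i * Lf r (z i)
      = (r 0 : ℝ) * (∑ i ∈ t, lam i * (z i).1) + (r 1 : ℝ) * (∑ i ∈ t, lam i * (z i).2)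
        - ((r 0 : ℝ) + (r 1 : ℝ) + (r 2 : ℝ))
          * (∑ i ∈ t, lam i * Real.log (Z (z i).1 (z i).2)) := by
    rw [Finset.mul_sum, Finset.mul_sum, Finset.mul_sum, ← Finset.sum_add_distrib,
      ← Finset.sum_sub_distrib]
    exact Finset.sum_congr rfl fun i _ => by simp only [Lf]; ring
  rw [expand]
  unfold Lf
  rw [fst_comb, snd_comb] at hlog ⊢
  nlinarith [mul_le_mul_of_nonneg_left hlog hm]

lemma P3_eq' (q : ℝ × ℝ) (r : Fin 3 → ℕ) :
    P3 q.1 q.2 r = Real.exp (Real.log (Nat.multinomial Finset.univ r : ℝ) + Lf r q) := by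
  have hC : (0:ℝ) < (Nat.multinomial Finset.univ r : ℝ) := by
    exact_mod_cast Nat.multinomial_pos _ _
  rw [Real.exp_add, Real.exp_log hC]
  have := P3_eq q.1 q.2 r
  rwa [show ((q.1, q.2) : ℝ × ℝ) = q from rfl] at this

lemma le_P3_comb {ι : Type*} (t : Finset ι) (lam : ι → ℝ) (z : ι → ℝ × ℝ)
    (h0 : ∀ i ∈ t, 0 ≤ lam i) (h1 : ∑ i ∈ t, lam i = 1) (r : Fin 3 → ℕ)
    {c : ℝ} (hc : 0 < c) (hcle : ∀ i ∈ t, c ≤ P3 (z i).1 (z i).2 r) :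
    c ≤ P3 (∑ i ∈ t, lam i • z i).1 (∑ i ∈ t, lam i • z i).2 r := by
  set K := Real.log (Nat.multinomial Finset.univ r : ℝ) with hK
  have hlogle : ∀ i ∈ t, Real.log c ≤ K + Lf r (z i) := by
    intro i hi
    have h := hcle i hi
    rw [P3_eq' (z i) r] at h
    have h2 := Real.log_le_log hc h
    rwa [Real.log_exp] at h2
  have h3 : Real.log c = ∑ i ∈ t, lam i * Real.log c := by
    rw [← Finset.sum_mul, h1, one_mul]
  have h4 : ∑ i ∈ t, lam i * Real.log c ≤ ∑ i ∈ t, lam i * (K + Lf r (z i)) :=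
    Finset.sum_le_sum fun i hi => mul_le_mul_of_nonneg_left (hlogle i hi) (h0 i hi)
  have h5 : ∑ i ∈ t, lam i * (K + Lf r (z i)) = K + ∑ i ∈ t, lam i * Lf r (z i) := by
    rw [Finset.sum_congr rfl (fun i _ => mul_add (lam i) K (Lf r (z i))),
      Finset.sum_add_distrib, ← Finset.sum_mul, h1, one_mul]
  have h6 := Lf_comb_le t lam z h0 h1 r
  have step : Real.log c ≤ K + Lf r (∑ i ∈ t, lam i • z i) := by
    rw [h3]
    calc ∑ i ∈ t, lam i * Real.log c ≤ K + ∑ i ∈ t, lam i * Lf r (z i) := by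
          rw [← h5]; exact h4
      _ ≤ K + Lf r (∑ i ∈ t, lam i • z i) := by linarith
  calc c = Real.exp (Real.log c) := (Real.exp_log hc).symm
    _ ≤ Real.exp (K + Lf r (∑ i ∈ t, lam i • z i)) := Real.exp_le_exp.2 step
    _ = P3 (∑ i ∈ t, lam i • z i).1 (∑ i ∈ t, lam i • z i).2 r := (P3_eq' _ r).symm

lemma gfun_comb {ι : Type*} (t : Finset ι) (lam : ι → ℝ) (z : ι → ℝ × ℝ)
    (h1 : ∑ i ∈ t, lam i = 1) (r rhat : Fin 3 → ℕ) :
    gfun r rhat (∑ i ∈ t, lam i • z i) = ∑ i ∈ t, lam i * gfun r rhat (z i) := by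
  have hterm : ∀ i ∈ t, lam i * gfun r rhat (z i)
      = ((r 0 : ℝ) - (rhat 0 : ℝ)) * (lam i * (z i).1)
        + ((r 1 : ℝ) - (rhat 1 : ℝ)) * (lam i * (z i).2)
        - lam i * (Real.log (Nat.multinomial Finset.univ rhat : ℝ)
            - Real.log (Nat.multinomial Finset.univ r : ℝ)) := fun i _ => by
    unfold gfun; ring
  symm
  rw [Finset.sum_congr rfl hterm, Finset.sum_sub_distrib, Finset.sum_add_distrib,
    ← Finset.mul_sum, ← Finset.mul_sum, ← Finset.sum_mul, h1, one_mul]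
  unfold gfun
  rw [fst_comb, snd_comb]

lemma comb_pos {ι : Type*} (t : Finset ι) (lam g : ι → ℝ)
    (h0 : ∀ i ∈ t, 0 ≤ lam i) (h1 : ∑ i ∈ t, lam i = 1) (hg : ∀ i ∈ t, 0 < g i) :
    0 < ∑ i ∈ t, lam i * g i := by
  obtain ⟨i, hi, hpos⟩ : ∃ i ∈ t, 0 < lam i := by
    by_contra h
    push_neg at h
    have : ∑ i ∈ t, lam i = 0 :=
      Finset.sum_eq_zero fun i hi => le_antisymm (h i hi) (h0 i hi)
    rw [this] at h1
    norm_num at h1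
  exact Finset.sum_pos' (fun j hj => mul_nonneg (h0 j hj) (hg j hj).le)
    ⟨i, hi, mul_pos hpos (hg i hi)⟩

lemma P3_lt_of_g_pos (n : ℕ) (r rhat : Fin 3 → ℕ) (hr : ∑ i, r i = n)
    (hrhat : ∑ i, rhat i = n) (x : ℝ × ℝ) (hg : 0 < gfun r rhat x) :
    P3 x.1 x.2 rhat < P3 x.1 x.2 r := by
  rw [P3_eq' x rhat, P3_eq' x r]
  apply Real.exp_lt_exp.2
  have hr' : (r 0 : ℝ) + (r 1 : ℝ) + (r 2 : ℝ) = n := by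
    rw [Fin.sum_univ_three] at hr
    exact_mod_cast hr
  have hrhat' : (rhat 0 : ℝ) + (rhat 1 : ℝ) + (rhat 2 : ℝ) = n := by
    rw [Fin.sum_univ_three] at hrhat
    exact_mod_cast hrhat
  unfold gfun at hg
  unfold Lf
  rw [hr', hrhat']
  nlinarith [hg]

/-- Certified p-value upper bound on a triangle: one minus the sum of
vertex-minimum probabilities of the definitely-out-of-tail outcomes upper-bounds
the exact p-value at every point of the triangle. -/
theorem pval_upper_bound_on_triangle (n : ℕ) (rhat : Fin 3 → ℕ)
    (hrhat : ∑ i, rhat i = n) (w : Fin 3 → ℝ × ℝ) :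
    ∀ x ∈ convexHull ℝ (Set.range w),
      pval3 n rhat x.1 x.2 ≤
        1 - ∑ r ∈ (Finset.Nat.antidiagonalTuple 3 n).filter
              (fun r => ∀ j, 0 < gfun r rhat (w j)),
            (Finset.univ.inf' ⟨0, Finset.mem_univ 0⟩ fun j => P3 (w j).1 (w j).2 r) := by
  intro x hx
  rw [convexHull_eq] at hx
  obtain ⟨ι, t, lam, z, hlam0, hlam1, hzmem, hxeq⟩ := hx
  rw [Finset.centerMass_eq_of_sum_1 _ _ hlam1] at hxeq
  subst hxeq
  set x : ℝ × ℝ := ∑ i ∈ t, lam i • z i with hxdef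
  set S := Finset.Nat.antidiagonalTuple 3 n with hS
  set O := S.filter (fun r => ∀ j, 0 < gfun r rhat (w j)) with hO
  have hOS : O ⊆ S := Finset.filter_subset _ _
  have hkey : ∀ r ∈ O, P3 x.1 x.2 rhat < P3 x.1 x.2 r := by
    intro r hrO
    obtain ⟨hrS, hg⟩ := Finset.mem_filter.1 hrO
    have hr : ∑ i, r i = n := Finset.Nat.mem_antidiagonalTuple.1 (hS ▸ hrS)
    apply P3_lt_of_g_pos n r rhat hr hrhat
    rw [hxdef, gfun_comb t lam z hlam1]
    apply comb_pos t lam _ hlam0 hlam1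
    intro i hi
    obtain ⟨j, hj⟩ := hzmem i hi
    rw [← hj]
    exact hg j
  have hT : S.filter (fun r => P3 x.1 x.2 r ≤ P3 x.1 x.2 rhat) ⊆ S \ O := by
    intro r hrT
    obtain ⟨hrS, hle⟩ := Finset.mem_filter.1 hrT
    exact Finset.mem_sdiff.2 ⟨hrS, fun hrO => absurd hle (not_le.2 (hkey r hrO))⟩
  have h1 : pval3 n rhat x.1 x.2 ≤ ∑ r ∈ S \ O, P3 x.1 x.2 r := by
    unfold pval3
    exact Finset.sum_le_sum_of_subset_of_nonneg hT (fun r _ _ => (P3_pos _ _ _).le)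
  have h2 : ∑ r ∈ S \ O, P3 x.1 x.2 r = 1 - ∑ r ∈ O, P3 x.1 x.2 r := by
    rw [Finset.sum_sdiff_eq_sub hOS, hS, sum_P3]
  have h3 : ∑ r ∈ O, (Finset.univ.inf' ⟨0, Finset.mem_univ 0⟩
        fun j => P3 (w j).1 (w j).2 r) ≤ ∑ r ∈ O, P3 x.1 x.2 r := by
    refine Finset.sum_le_sum fun r hrO => ?_
    have hcpos : 0 < Finset.univ.inf' ⟨0, Finset.mem_univ 0⟩
        fun j => P3 (w j).1 (w j).2 r :=
      (Finset.lt_inf'_iff _).2 fun j _ => P3_pos _ _ _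
    rw [hxdef]
    apply le_P3_comb t lam z hlam0 hlam1 r hcpos
    intro i hi
    obtain ⟨j, hj⟩ := hzmem i hi
    rw [← hj]
    exact Finset.inf'_le _ (Finset.mem_univ j)
  linarith [h1, h2, h3]
end

section
/- (Soundness of the INTERSECT certificate) Suppose T ⊂ ℝ² is a triangle such that the certified lower bounds satisfy min{ρ̲_{A,T}, ρ̲_{B,T}} ≥ α + τ, where ρ̲_{X,T} = Σ_{r ∈ I_T(r̂^{(X)})} P̲_T(r) is the certified lower bound for outcome r̂^{(X)}. Then there exists p ∈ Δ₃ with ρ_A(p) ≥ α + τ and ρ_B(p) ≥ α + τ; i.e., the minimum-volume confidence sets at level α + τ intersect. -/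
/-- Multinomial probability of count vector `r` under parameter `p`. -/
noncomputable def Pk {k : ℕ} (p : Fin k → ℝ) (r : Fin k → ℕ) : ℝ :=
  (Nat.multinomial Finset.univ r : ℝ) * ∏ i, p i ^ r i

/-- Exact p-value of the observed outcome `rhat` under the null `p`. -/
noncomputable def pval {k : ℕ} (n : ℕ) (rhat : Fin k → ℕ) (p : Fin k → ℝ) : ℝ :=
  ∑ r ∈ (Finset.Nat.antidiagonalTuple k n).filter (fun r => Pk p r ≤ Pk p rhat), Pk p r

/-- Certified lower bound `ρ̲` over the triangle with vertices `w` for outcome `rhat`: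
sum over the definitely-in-tail outcomes of the vertex-minimum probability. -/
noncomputable def certLB (n : ℕ) (rhat : Fin 3 → ℕ) (w : Fin 3 → ℝ × ℝ) : ℝ :=
  ∑ r ∈ (Finset.Nat.antidiagonalTuple 3 n).filter (fun r => ∀ j, gfun r rhat (w j) ≤ 0),
    (Finset.univ.inf' ⟨0, Finset.mem_univ 0⟩ fun j => Pk (p3 (w j).1 (w j).2) r)


lemma Pk_p3_eq (u v : ℝ) (r : Fin 3 → ℕ) :
    Pk (p3 u v) r = (Nat.multinomial Finset.univ r : ℝ) *
      Real.exp (u * r 0 + v * r 1) / Z u v ^ (r 0 + r 1 + r 2) := by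
  have hz := (Z_pos u v).ne'
  unfold Pk p3
  rw [Fin.prod_univ_three]
  simp only [Matrix.cons_val_zero, Matrix.cons_val_one, Matrix.head_cons,
    Matrix.cons_val_two, Matrix.tail_cons]
  rw [div_pow, div_pow, div_pow, one_pow, Real.exp_add, pow_add, pow_add]
  have e0 : Real.exp u ^ r 0 = Real.exp (u * r 0) := by
    rw [mul_comm, Real.exp_nat_mul]
  have e1 : Real.exp v ^ r 1 = Real.exp (v * r 1) := by
    rw [mul_comm, Real.exp_nat_mul]
  rw [e0, e1]
  field_simp

lemma multinomial_pos3 (r : Fin 3 → ℕ) :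
    (0:ℝ) < (Nat.multinomial Finset.univ r : ℝ) := by
  exact_mod_cast Nat.multinomial_pos _ _

lemma g_le_imp (u v : ℝ) (r rhat : Fin 3 → ℕ) (n : ℕ)
    (hr : ∑ i, r i = n) (hrh : ∑ i, rhat i = n)
    (hg : gfun r rhat (u, v) ≤ 0) :
    Pk (p3 u v) r ≤ Pk (p3 u v) rhat := by
  have hsr : r 0 + r 1 + r 2 = n := by rw [← hr, Fin.sum_univ_three]
  have hsrh : rhat 0 + rhat 1 + rhat 2 = n := by rw [← hrh, Fin.sum_univ_three]
  rw [Pk_p3_eq, Pk_p3_eq, hsr, hsrh]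
  have hcr := multinomial_pos3 r
  have hcrh := multinomial_pos3 rhat
  have hexp : Real.log (Nat.multinomial Finset.univ r : ℝ) + (u * r 0 + v * r 1)
      ≤ Real.log (Nat.multinomial Finset.univ rhat : ℝ) + (u * rhat 0 + v * rhat 1) := by
    unfold gfun at hg; simp only at hg; nlinarith [hg]
  have e1 : Real.exp (Real.log (Nat.multinomial Finset.univ r : ℝ) + (u * r 0 + v * r 1))
      = (Nat.multinomial Finset.univ r : ℝ) * Real.exp (u * r 0 + v * r 1) := by
    rw [Real.exp_add, Real.exp_log hcr]
  have e2 : Real.exp (Real.log (Nat.multinomial Finset.univ rhat : ℝ) + (u * rhat 0 + v * rhat 1))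
      = (Nat.multinomial Finset.univ rhat : ℝ) * Real.exp (u * rhat 0 + v * rhat 1) := by
    rw [Real.exp_add, Real.exp_log hcrh]
  have hzp : (0:ℝ) < Z u v ^ n := pow_pos (Z_pos u v) n
  rw [← e1, ← e2]
  exact (div_le_div_iff_of_pos_right hzp).mpr (Real.exp_le_exp.mpr hexp)

lemma p3_nonneg (u v : ℝ) (i : Fin 3) : 0 ≤ p3 u v i := by
  have hz := Z_pos u v
  fin_cases i <;> simp [p3] <;> positivity

lemma Pk_nonneg (u v : ℝ) (r : Fin 3 → ℕ) : 0 ≤ Pk (p3 u v) r := by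
  unfold Pk
  apply mul_nonneg (by positivity)
  exact Finset.prod_nonneg fun i _ => pow_nonneg (p3_nonneg u v i) _

lemma certLB_le_pval (n : ℕ) (rhat : Fin 3 → ℕ) (hrh : ∑ i, rhat i = n)
    (w : Fin 3 → ℝ × ℝ) :
    certLB n rhat w ≤ pval n rhat (p3 (w 0).1 (w 0).2) := by
  unfold certLB pval
  set p := p3 (w 0).1 (w 0).2 with hp
  have hsub : (Finset.Nat.antidiagonalTuple 3 n).filter
      (fun r => ∀ j, gfun r rhat (w j) ≤ 0) ⊆
      (Finset.Nat.antidiagonalTuple 3 n).filter (fun r => Pk p r ≤ Pk p rhat) := by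
    intro r hr
    rw [Finset.mem_filter] at hr ⊢
    refine ⟨hr.1, ?_⟩
    have hrsum : ∑ i, r i = n := (Finset.Nat.mem_antidiagonalTuple.mp hr.1)
    exact g_le_imp (w 0).1 (w 0).2 r rhat n hrsum hrh (hr.2 0)
  calc ∑ r ∈ (Finset.Nat.antidiagonalTuple 3 n).filter
        (fun r => ∀ j, gfun r rhat (w j) ≤ 0),
        (Finset.univ.inf' ⟨0, Finset.mem_univ 0⟩ fun j => Pk (p3 (w j).1 (w j).2) r)
      ≤ ∑ r ∈ (Finset.Nat.antidiagonalTuple 3 n).filter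
        (fun r => ∀ j, gfun r rhat (w j) ≤ 0), Pk p r := by
        apply Finset.sum_le_sum
        intro r _
        exact Finset.inf'_le _ (Finset.mem_univ 0)
    _ ≤ _ := by
        apply Finset.sum_le_sum_of_subset_of_nonneg hsub
        intro r _ _
        exact Pk_nonneg _ _ r

/-- Soundness of the INTERSECT certificate: if the certified lower bounds for both
outcomes on a triangle are at least `α + τ`, then there is a simplex point whose
exact p-values for both outcomes are at least `α + τ`, i.e., the minimum-volume
confidence sets at level `α + τ` intersect. -/
theorem intersect_certificate_sound (n : ℕ) (rA rB : Fin 3 → ℕ)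
    (hA : ∑ i, rA i = n) (hB : ∑ i, rB i = n)
    (α τ : ℝ) (w : Fin 3 → ℝ × ℝ)
    (hcert : α + τ ≤ min (certLB n rA w) (certLB n rB w)) :
    ∃ p : Fin 3 → ℝ, (∀ i, 0 ≤ p i) ∧ (∑ i, p i = 1) ∧
      α + τ ≤ pval n rA p ∧ α + τ ≤ pval n rB p := by
  refine ⟨p3 (w 0).1 (w 0).2, fun i => p3_nonneg _ _ i, ?_, ?_, ?_⟩
  · have hz := Z_pos (w 0).1 (w 0).2
    rw [Fin.sum_univ_three]
    simp only [p3, Matrix.cons_val_zero, Matrix.cons_val_one, Matrix.head_cons,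
      Matrix.cons_val_two, Matrix.tail_cons]
    field_simp [Z]
    linarith [show Z (w 0).1 (w 0).2 = 1 + Real.exp (w 0).1 + Real.exp (w 0).2 from rfl]
  · exact hcert.trans ((min_le_left _ _).trans (certLB_le_pval n rA hA w))
  · exact hcert.trans ((min_le_right _ _).trans (certLB_le_pval n rB hB w))
end
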